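/- Let 0 < s < 2, T > 0, and α = 1/2 − s/4. There exists a constant C > 0, depending only on s and T, such that for all continuous maps f, g : (0,T) → L²(ℝ) ∩ L⁴(ℝ) with sup_{t∈(0,T)} t^α ‖f(t)‖_{L⁴} < ∞ and sup_{t∈(0,T)} t^α ‖g(t)‖_{L⁴} < ∞, one has sup_{t∈(0,T)} t^α ∫₀ᵗ ‖S(t−t′)(f(t′)g(t′))‖_{L⁴(ℝ)} dt′ ≤ C · sup_{t∈(0,T)} ( t^{2α} ‖f(t)‖_{L⁴} ‖g(t)‖_{L⁴} ). -/

import Mathlib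

noncomputable section

open MeasureTheory Real Filter ENNReal

/-- The Fourier transform on `ℝ`, normalized so that Plancherel's theorem holds
(`‖𝓕 φ‖_{L²} = ‖φ‖_{L²}`). -/
def FT (f : ℝ → ℂ) (ξ : ℝ) : ℂ :=
  (((2 * π) ^ (-(1 / 2 : ℝ)) : ℝ) : ℂ) * ∫ x : ℝ, Complex.exp (-(Complex.I * x * ξ)) * f x

/-- The Gaussian heat kernel on `ℝ`. -/
def heatKernel (t x : ℝ) : ℝ :=
  (4 * π * t) ^ (-(1 / 2 : ℝ)) * Real.exp (-(x ^ 2) / (4 * t))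

/-- The heat semigroup `S(t)`: convolution with the Gaussian heat kernel for `t > 0`,
the identity for `t ≤ 0`.  For `φ ∈ L²` this agrees with the Fourier multiplier with
symbol `e^{-tξ²}`. -/
def heatS (t : ℝ) (φ : ℝ → ℂ) : ℝ → ℂ :=
  if t ≤ 0 then φ else fun x => ∫ y : ℝ, (heatKernel t (x - y) : ℂ) * φ y

/-- The homogeneous Sobolev norm `‖u‖_{Ḣˢ}`, valued in `ℝ≥0∞`. -/
def hNorm (s : ℝ) (u : ℝ → ℂ) : ℝ≥0∞ :=
  (∫⁻ ξ : ℝ, ENNReal.ofReal (|ξ| ^ (2 * s) * ‖FT u ξ‖ ^ 2)) ^ (1 / 2 : ℝ)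

/-- The `Xˢ` norm on functions `u : (0,T) → L²(ℝ)`, with time weight `α = 1/2 - s/4`. -/
def XNorm (s T : ℝ) (u : ℝ → ℝ → ℂ) : ℝ≥0∞ :=
  (⨆ t ∈ Set.Ioo (0 : ℝ) T, hNorm s (u t)) +
    ⨆ t ∈ Set.Ioo (0 : ℝ) T, ENNReal.ofReal (t ^ (1 / 2 - s / 4 : ℝ)) * eLpNorm (u t) 4 volume

/-- `u` is a continuous map from `(0,T)` into `L²(ℝ) ∩ L⁴(ℝ)`. -/
def ContL2L4 (T : ℝ) (u : ℝ → ℝ → ℂ) : Prop :=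
  (∀ t ∈ Set.Ioo (0 : ℝ) T, MemLp (u t) 2 volume ∧ MemLp (u t) 4 volume) ∧
    ∀ t ∈ Set.Ioo (0 : ℝ) T,
      Filter.Tendsto
        (fun t' => eLpNorm (u t' - u t) 2 volume + eLpNorm (u t' - u t) 4 volume)
        (nhdsWithin t (Set.Ioo (0 : ℝ) T)) (nhds 0)

/-- The Duhamel term `t ↦ ∫₀ᵗ S(t-t') w(t') dt'` (the Bochner integral in `L²`,
realized pointwise in `x`). -/
def duhamel (w : ℝ → ℝ → ℂ) (t : ℝ) (x : ℝ) : ℂ :=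
  ∫ t' in Set.Ioo (0 : ℝ) t, heatS (t - t') (w t') x

/-- A mild solution on `(0,T)` of the Kermack–McKendrick system with parameter `μ`
and initial data `(φ, ψ)`. -/
def IsMildSolution (μ T : ℝ) (φ ψ : ℝ → ℂ) (u v : ℝ → ℝ → ℂ) : Prop :=
  ContL2L4 T u ∧ ContL2L4 T v ∧
    (∀ t ∈ Set.Ioo (0 : ℝ) T,
      u t =ᵐ[volume] fun x => heatS t φ x - duhamel (fun t' y => u t' y * v t' y) t x) ∧
    ∀ t ∈ Set.Ioo (0 : ℝ) T,
      v t =ᵐ[volume] fun x =>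
        heatS t ψ x + duhamel (fun t' y => u t' y * v t' y - (μ : ℂ) * v t' y) t x

/-!
The heat flow smooths `L²` into `L⁴` at the rate `‖S(τ)h‖₄ ≤ τ^{-1/8} ‖h‖₂`. Pointwise,
Cauchy–Schwarz bounds `|G_τ * h|²` both by `‖G_τ‖₂² ‖h‖₂²` and, since `∫ G_τ = 1`, by
`G_τ * |h|²`; integrating the product of the two bounds gives
`‖G_τ * h‖₄⁴ ≤ ‖G_τ‖₂² ‖h‖₂⁴`, and `‖G_τ‖₂² = (8πτ)^{-1/2}` because `G_τ² = (8πτ)^{-1/2} G_{τ/2}`.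
With Hölder, `‖fg‖₂ ≤ ‖f‖₄ ‖g‖₄`, the integrand at time `t'` is at most
`(t - t')^{-1/8} t'^{-2α} M`, where `M` is the supremum on the right. Since `0 ≤ 2α < 1`, the
Beta-type integral `∫₀ᵗ (t - t')^{-1/8} t'^{-2α} dt'` is `O(t^{7/8 - 2α})`, and
`t^α · t^{7/8 - 2α} = t^{7/8 - α} ≤ T^{7/8 - α}`.
-/

theorem ENNReal.sq_lintegral_mul_le {α : Type*} [MeasurableSpace α] {μ : Measure α}
    {f g : α → ℝ≥0∞} (hf : AEMeasurable f μ) (hg : AEMeasurable g μ) :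
    (∫⁻ a, f a * g a ∂μ) ^ 2 ≤ (∫⁻ a, f a ^ 2 ∂μ) * ∫⁻ a, g a ^ 2 ∂μ := by
  have h := ENNReal.lintegral_mul_le_Lp_mul_Lq μ .two_two hf hg
  simp only [Pi.mul_apply, ENNReal.rpow_two] at h
  calc (∫⁻ a, f a * g a ∂μ) ^ 2
      ≤ ((∫⁻ a, f a ^ 2 ∂μ) ^ (1 / 2 : ℝ) * (∫⁻ a, g a ^ 2 ∂μ) ^ (1 / 2 : ℝ)) ^ 2 := by
        gcongr
    _ = (∫⁻ a, f a ^ 2 ∂μ) * ∫⁻ a, g a ^ 2 ∂μ := by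
        rw [mul_pow, ← ENNReal.rpow_natCast, ← ENNReal.rpow_natCast, ← ENNReal.rpow_mul,
          ← ENNReal.rpow_mul]
        norm_num

theorem ENNReal.sq_lintegral_mul_le_weighted {α : Type*} [MeasurableSpace α] {μ : Measure α}
    {w g : α → ℝ≥0∞} (hw : AEMeasurable w μ) (hg : AEMeasurable g μ) :
    (∫⁻ a, w a * g a ∂μ) ^ 2 ≤ (∫⁻ a, w a ∂μ) * ∫⁻ a, w a * g a ^ 2 ∂μ := by
  have hsqrt : ∀ z : ℝ≥0∞, (z ^ (1 / 2 : ℝ)) ^ 2 = z := fun z => by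
    rw [← ENNReal.rpow_natCast, ← ENNReal.rpow_mul]; norm_num
  have hsplit : ∀ a, w a ^ (1 / 2 : ℝ) * (w a ^ (1 / 2 : ℝ) * g a) = w a * g a := fun a => by
    rw [← mul_assoc, ← sq, hsqrt]
  have h := ENNReal.sq_lintegral_mul_le (f := fun a => w a ^ (1 / 2 : ℝ))
    (g := fun a => w a ^ (1 / 2 : ℝ) * g a) (hw.pow_const _) ((hw.pow_const _).mul hg)
  simpa only [hsplit, mul_pow, hsqrt] using h

section Convolution

variable {G : Type*} [MeasurableSpace G] [AddCommGroup G] [MeasurableAdd₂ G] [MeasurableNeg G]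
  {μ : Measure G} [SFinite μ] [μ.IsAddLeftInvariant] [μ.IsNegInvariant]

theorem lintegral_convolution_pow_four_le {K φ : G → ℝ≥0∞} (hK : Measurable K)
    (hK₁ : ∫⁻ x, K x ∂μ = 1) (hφ : AEMeasurable φ μ) :
    ∫⁻ x, (∫⁻ y, K (x - y) * φ y ∂μ) ^ 4 ∂μ ≤ (∫⁻ x, K x ^ 2 ∂μ) * (∫⁻ y, φ y ^ 2 ∂μ) ^ 2 := by
  have hKx : ∀ x, AEMeasurable (fun y => K (x - y)) μ := fun x => by fun_prop
  have hCS : ∀ x, (∫⁻ y, K (x - y) * φ y ∂μ) ^ 2 ≤ (∫⁻ x, K x ^ 2 ∂μ) * ∫⁻ y, φ y ^ 2 ∂μ :=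
    fun x => (ENNReal.sq_lintegral_mul_le (hKx x) hφ).trans_eq <| by
      rw [lintegral_sub_left_eq_self (fun y => K y ^ 2) x]
  have hJensen : ∀ x, (∫⁻ y, K (x - y) * φ y ∂μ) ^ 2 ≤ ∫⁻ y, K (x - y) * φ y ^ 2 ∂μ :=
    fun x => (ENNReal.sq_lintegral_mul_le_weighted (hKx x) hφ).trans_eq <| by
      rw [lintegral_sub_left_eq_self K x, hK₁, one_mul]
  have hFubini : ∫⁻ x, ∫⁻ y, K (x - y) * φ y ^ 2 ∂μ ∂μ = ∫⁻ y, φ y ^ 2 ∂μ := by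
    rw [lintegral_lintegral_swap (by fun_prop)]
    refine lintegral_congr fun y => ?_
    rw [lintegral_mul_const _ (by fun_prop), lintegral_sub_right_eq_self K y, hK₁, one_mul]
  calc ∫⁻ x, (∫⁻ y, K (x - y) * φ y ∂μ) ^ 4 ∂μ
      = ∫⁻ x, (∫⁻ y, K (x - y) * φ y ∂μ) ^ 2 * (∫⁻ y, K (x - y) * φ y ∂μ) ^ 2 ∂μ := by
        simp_rw [← pow_add]
    _ ≤ ∫⁻ x, ((∫⁻ x, K x ^ 2 ∂μ) * ∫⁻ y, φ y ^ 2 ∂μ) * ∫⁻ y, K (x - y) * φ y ^ 2 ∂μ ∂μ :=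
        lintegral_mono fun x => mul_le_mul' (hCS x) (hJensen x)
    _ = (∫⁻ x, K x ^ 2 ∂μ) * (∫⁻ y, φ y ^ 2 ∂μ) ^ 2 := by
        rw [lintegral_const_mul'' _ (by fun_prop), hFubini, mul_assoc, sq]

end Convolution

section HeatKernel

variable {t : ℝ}

theorem heatKernel_nonneg (ht : 0 < t) (x : ℝ) : 0 ≤ heatKernel t x := by
  unfold heatKernel; positivity

@[fun_prop]
theorem measurable_heatKernel (t : ℝ) : Measurable (heatKernel t) := by
  unfold heatKernel; fun_prop

theorem heatKernel_eq_gaussian (t x : ℝ) :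
    heatKernel t x = (4 * π * t) ^ (-(1 / 2 : ℝ)) * Real.exp (-(4 * t)⁻¹ * x ^ 2) := by
  rw [heatKernel, neg_mul, ← div_eq_inv_mul, neg_div]

theorem integrable_heatKernel (ht : 0 < t) : Integrable (heatKernel t) := by
  simp_rw [funext (heatKernel_eq_gaussian t)]
  exact (integrable_exp_neg_mul_sq (by positivity)).const_mul _

theorem integral_heatKernel (ht : 0 < t) : ∫ x, heatKernel t x = 1 := by
  have h4πt : 0 < 4 * π * t := by positivity
  simp_rw [heatKernel_eq_gaussian, integral_const_mul, integral_gaussian]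
  rw [show π / (4 * t)⁻¹ = 4 * π * t by rw [div_inv_eq_mul]; ring, Real.sqrt_eq_rpow,
    ← Real.rpow_add h4πt]
  norm_num

theorem lintegral_heatKernel (ht : 0 < t) : ∫⁻ x, ENNReal.ofReal (heatKernel t x) = 1 := by
  rw [← ofReal_integral_eq_lintegral_ofReal (integrable_heatKernel ht)
    (.of_forall (heatKernel_nonneg ht)), integral_heatKernel ht, ENNReal.ofReal_one]

theorem heatKernel_sq (ht : 0 < t) (x : ℝ) :
    heatKernel t x ^ 2 = (8 * π * t) ^ (-(1 / 2 : ℝ)) * heatKernel (t / 2) x := by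
  have h4πt : 0 < 4 * π * t := by positivity
  have hsq : ((4 * π * t) ^ (-(1 / 2 : ℝ))) ^ 2 = (8 * π * t) ^ (-(1 / 2 : ℝ)) *
      (4 * π * (t / 2)) ^ (-(1 / 2 : ℝ)) := by
    rw [← Real.mul_rpow (by positivity) (by positivity),
      show 8 * π * t * (4 * π * (t / 2)) = (4 * π * t) ^ 2 by ring,
      ← Real.rpow_natCast, ← Real.rpow_natCast, ← Real.rpow_mul h4πt.le,
      ← Real.rpow_mul h4πt.le]
    norm_num
  rw [heatKernel, heatKernel, mul_pow, hsq, mul_assoc, ← Real.exp_nat_mul]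
  congr 3
  field_simp
  ring

theorem lintegral_heatKernel_sq (ht : 0 < t) :
    ∫⁻ x, ENNReal.ofReal (heatKernel t x) ^ 2 = ENNReal.ofReal ((8 * π * t) ^ (-(1 / 2 : ℝ))) := by
  simp_rw [← ENNReal.ofReal_pow (heatKernel_nonneg ht _), heatKernel_sq ht,
    ENNReal.ofReal_mul (by positivity : (0 : ℝ) ≤ (8 * π * t) ^ (-(1 / 2 : ℝ)))]
  rw [lintegral_const_mul _ (by fun_prop), lintegral_heatKernel (by positivity), mul_one]

end HeatKernel

section Smoothing

variable {τ : ℝ}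

theorem enorm_heatS_le (hτ : 0 < τ) (φ : ℝ → ℂ) (x : ℝ) :
    ‖heatS τ φ x‖ₑ ≤ ∫⁻ y, ENNReal.ofReal (heatKernel τ (x - y)) * ‖φ y‖ₑ := by
  rw [heatS, if_neg hτ.not_ge]
  refine (enorm_integral_le_lintegral_enorm _).trans_eq (lintegral_congr fun y => ?_)
  rw [enorm_mul, ← ofReal_norm, Complex.norm_real, Real.norm_of_nonneg (heatKernel_nonneg hτ _)]

theorem eLpNorm_heatS_le (hτ : 0 < τ) {φ : ℝ → ℂ} (hφ : AEStronglyMeasurable φ) :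
    eLpNorm (heatS τ φ) 4 volume ≤ ENNReal.ofReal (τ ^ (-(1 / 8 : ℝ))) * eLpNorm φ 2 volume := by
  have hL4 : eLpNorm (heatS τ φ) 4 volume ^ 4 = ∫⁻ x, ‖heatS τ φ x‖ₑ ^ 4 := by
    simpa using eLpNorm_nnreal_pow_eq_lintegral (f := heatS τ φ) (μ := volume) (p := 4)
      (by norm_num)
  have hL2 : eLpNorm φ 2 volume ^ 2 = ∫⁻ x, ‖φ x‖ₑ ^ 2 := by
    simpa using eLpNorm_nnreal_pow_eq_lintegral (f := φ) (μ := volume) (p := 2) (by norm_num)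
  have hK : ∫⁻ x, ENNReal.ofReal (heatKernel τ x) ^ 2 ≤
      ENNReal.ofReal (τ ^ (-(1 / 8 : ℝ))) ^ 4 := by
    rw [lintegral_heatKernel_sq hτ, ← ENNReal.ofReal_pow (by positivity), ← Real.rpow_natCast,
      ← Real.rpow_mul hτ.le]
    refine ENNReal.ofReal_le_ofReal ?_
    rw [show -(1 / 8 : ℝ) * (4 : ℕ) = -(1 / 2) by norm_num]
    exact Real.rpow_le_rpow_of_nonpos hτ (by nlinarith [Real.pi_gt_three]) (by norm_num)
  rw [← ENNReal.pow_le_pow_left_iff (n := 4) (by norm_num), hL4, mul_pow,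
    show eLpNorm φ 2 volume ^ 4 = (eLpNorm φ 2 volume ^ 2) ^ 2 by rw [← pow_mul], hL2]
  calc ∫⁻ x, ‖heatS τ φ x‖ₑ ^ 4
      ≤ ∫⁻ x, (∫⁻ y, ENNReal.ofReal (heatKernel τ (x - y)) * ‖φ y‖ₑ) ^ 4 :=
        lintegral_mono fun x => ENNReal.pow_le_pow_left (enorm_heatS_le hτ φ x)
    _ ≤ (∫⁻ x, ENNReal.ofReal (heatKernel τ x) ^ 2) * (∫⁻ y, ‖φ y‖ₑ ^ 2) ^ 2 :=
        lintegral_convolution_pow_four_le (by fun_prop) (lintegral_heatKernel hτ) hφ.enorm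
    _ ≤ _ := by gcongr

end Smoothing

section TimeIntegral

variable {t : ℝ}

theorem setLIntegral_Ioo_rpow (ht : 0 < t) {r : ℝ} (hr : -1 < r) :
    ∫⁻ s in Set.Ioo 0 t, ENNReal.ofReal (s ^ r) = ENNReal.ofReal (t ^ (r + 1) / (r + 1)) := by
  have hint : IntegrableOn (fun s : ℝ => s ^ r) (Set.Ioo 0 t) :=
    (intervalIntegral.intervalIntegrable_rpow' hr).1.mono_set
      (Set.Ioo_subset_Ioc_self.trans (Set.Ioc_subset_uIoc))
  rw [← ofReal_integral_eq_lintegral_ofReal hint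
    ((ae_restrict_iff' measurableSet_Ioo).2 (.of_forall fun s hs => Real.rpow_nonneg hs.1.le r)),
    ← integral_Ioc_eq_integral_Ioo, ← intervalIntegral.integral_of_le ht.le,
    integral_rpow (.inl hr), Real.zero_rpow (by linarith), sub_zero]

theorem setLIntegral_Ioo_sub_rpow (ht : 0 < t) {r : ℝ} (hr : -1 < r) :
    ∫⁻ s in Set.Ioo 0 t, ENNReal.ofReal ((t - s) ^ r) =
      ENNReal.ofReal (t ^ (r + 1) / (r + 1)) := by
  have hrefl := (Measure.measurePreserving_sub_left volume t).setLIntegral_comp_preimage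
    (measurableSet_Ioo (a := 0) (b := t)) (f := fun s => ENNReal.ofReal (s ^ r)) (by fun_prop)
  rw [Set.preimage_const_sub_Ioo, sub_self, sub_zero] at hrefl
  rw [hrefl, setLIntegral_Ioo_rpow ht hr]

/-- On `(0, t)` one of `s`, `t - s` is at least `t / 2`. -/
theorem rpow_sub_mul_rpow_le {a b s : ℝ} (hs₀ : 0 < s) (hst : s < t) (ha : 0 ≤ a) (hb : 0 ≤ b) :
    (t - s) ^ (-a) * s ^ (-b) ≤ (t / 2) ^ (-a) * s ^ (-b) + (t / 2) ^ (-b) * (t - s) ^ (-a) := by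
  have hts : 0 ≤ t - s := by linarith
  have ht₂ : 0 ≤ t / 2 := by linarith
  rcases le_total s (t / 2) with hs | hs
  · refine le_add_of_le_of_nonneg ?_ (mul_nonneg (by positivity) (Real.rpow_nonneg hts _))
    exact mul_le_mul_of_nonneg_right
      (Real.rpow_le_rpow_of_nonpos (by linarith) (by linarith) (by linarith)) (by positivity)
  · refine le_add_of_nonneg_of_le (by positivity) ?_
    rw [mul_comm]
    exact mul_le_mul_of_nonneg_right (Real.rpow_le_rpow_of_nonpos (by linarith) hs (by linarith))
      (Real.rpow_nonneg hts _)

theorem setLIntegral_Ioo_rpow_sub_mul_rpow_le (ht : 0 < t) {a b : ℝ} (ha₀ : 0 ≤ a) (ha₁ : a < 1)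
    (hb₀ : 0 ≤ b) (hb₁ : b < 1) :
    ∫⁻ s in Set.Ioo 0 t, ENNReal.ofReal ((t - s) ^ (-a) * s ^ (-b)) ≤
      ENNReal.ofReal ((2 ^ a / (1 - b) + 2 ^ b / (1 - a)) * t ^ (1 - a - b)) := by
  have hsplit : ∀ s ∈ Set.Ioo 0 t, ENNReal.ofReal ((t - s) ^ (-a) * s ^ (-b)) ≤
      ENNReal.ofReal ((t / 2) ^ (-a)) * ENNReal.ofReal (s ^ (-b)) +
        ENNReal.ofReal ((t / 2) ^ (-b)) * ENNReal.ofReal ((t - s) ^ (-a)) := fun s ⟨hs₀, hst⟩ => by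
    have hts : 0 ≤ t - s := by linarith
    refine (ENNReal.ofReal_le_ofReal (rpow_sub_mul_rpow_le hs₀ hst ha₀ hb₀)).trans_eq ?_
    rw [ENNReal.ofReal_add (by positivity) (by positivity), ENNReal.ofReal_mul (by positivity),
      ENNReal.ofReal_mul (by positivity)]
  have hhalf : ∀ c d : ℝ, (t / 2) ^ (-c) * (t ^ (-d + 1) / (-d + 1)) =
      2 ^ c / (1 - d) * t ^ (1 - c - d) := by
    intro c d
    rw [Real.div_rpow ht.le zero_le_two, Real.rpow_neg zero_le_two, div_inv_eq_mul,
      mul_right_comm, mul_div_assoc', ← Real.rpow_add ht,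
      show -c + (-d + 1) = 1 - c - d by ring, show -d + 1 = 1 - d by ring]
    ring
  calc ∫⁻ s in Set.Ioo 0 t, ENNReal.ofReal ((t - s) ^ (-a) * s ^ (-b))
      ≤ ∫⁻ s in Set.Ioo 0 t, (ENNReal.ofReal ((t / 2) ^ (-a)) * ENNReal.ofReal (s ^ (-b)) +
          ENNReal.ofReal ((t / 2) ^ (-b)) * ENNReal.ofReal ((t - s) ^ (-a))) :=
        setLIntegral_mono (by fun_prop) hsplit
    _ = ENNReal.ofReal ((t / 2) ^ (-a)) * ENNReal.ofReal (t ^ (-b + 1) / (-b + 1)) +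
          ENNReal.ofReal ((t / 2) ^ (-b)) * ENNReal.ofReal (t ^ (-a + 1) / (-a + 1)) := by
        rw [lintegral_add_left (by fun_prop), lintegral_const_mul _ (by fun_prop),
          lintegral_const_mul _ (by fun_prop), setLIntegral_Ioo_rpow ht (by linarith),
          setLIntegral_Ioo_sub_rpow ht (by linarith)]
    _ = ENNReal.ofReal ((2 ^ a / (1 - b) + 2 ^ b / (1 - a)) * t ^ (1 - a - b)) := by
        have hb : 0 < -b + 1 := by linarith
        have ha : 0 < -a + 1 := by linarith
        rw [← ENNReal.ofReal_mul (by positivity), ← ENNReal.ofReal_mul (by positivity),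
          ← ENNReal.ofReal_add (by positivity) (by positivity), hhalf, hhalf]
        ring_nf

end TimeIntegral

theorem eLpNorm_heatS_mul_le {τ : ℝ} (hτ : 0 < τ) {f g : ℝ → ℂ} (hf : AEStronglyMeasurable f)
    (hg : AEStronglyMeasurable g) :
    eLpNorm (heatS τ fun x => f x * g x) 4 volume ≤
      ENNReal.ofReal (τ ^ (-(1 / 8 : ℝ))) * (eLpNorm f 4 volume * eLpNorm g 4 volume) := by
  have : ENNReal.HolderTriple 4 4 2 := ⟨by
    rw [← two_mul, show (4 : ℝ≥0∞) = 2 * 2 by norm_num, ENNReal.mul_inv (by simp) (by simp),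
      ← mul_assoc, ENNReal.mul_inv_cancel (by simp) (by simp), one_mul]⟩
  refine (eLpNorm_heatS_le (φ := fun x => f x * g x) hτ (hf.mul hg)).trans ?_
  gcongr
  simpa using eLpNorm_le_eLpNorm_mul_eLpNorm'_of_norm (p := 4) (q := 4) (r := 2) hf hg (· * ·) 1
    (by simp)

theorem le_ofReal_rpow_neg_mul_iSup {S : Set ℝ} {F : ℝ → ℝ≥0∞} {β u : ℝ} (hu : u ∈ S)
    (hu₀ : 0 < u) : F u ≤ ENNReal.ofReal (u ^ (-β)) * ⨆ v ∈ S, ENNReal.ofReal (v ^ β) * F v := by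
  calc F u = ENNReal.ofReal (u ^ (-β)) * (ENNReal.ofReal (u ^ β) * F u) := by
        rw [← mul_assoc, ← ENNReal.ofReal_mul (by positivity), ← Real.rpow_add hu₀,
          neg_add_cancel, Real.rpow_zero, ENNReal.ofReal_one, one_mul]
    _ ≤ _ := by
        gcongr
        exact le_iSup₂ (f := fun v (_ : v ∈ S) => ENNReal.ofReal (v ^ β) * F v) u hu

theorem eLpNorm_heatS_mul_le_iSup {S : Set ℝ} {τ t' β : ℝ} {f g : ℝ → ℝ → ℂ}
    (hf : AEStronglyMeasurable (f t')) (hg : AEStronglyMeasurable (g t')) (hτ : 0 < τ)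
    (ht' : t' ∈ S) (ht'₀ : 0 < t') :
    eLpNorm (heatS τ fun x => f t' x * g t' x) 4 volume ≤
      ENNReal.ofReal (τ ^ (-(1 / 8 : ℝ)) * t' ^ (-β)) *
        ⨆ t ∈ S, ENNReal.ofReal (t ^ β) * (eLpNorm (f t) 4 volume * eLpNorm (g t) 4 volume) := by
  calc eLpNorm (heatS τ fun x => f t' x * g t' x) 4 volume
      ≤ ENNReal.ofReal (τ ^ (-(1 / 8 : ℝ))) *
          (eLpNorm (f t') 4 volume * eLpNorm (g t') 4 volume) :=
        eLpNorm_heatS_mul_le hτ hf hg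
    _ ≤ _ := by
        rw [ENNReal.ofReal_mul (by positivity), mul_assoc]
        gcongr _ * ?_
        exact le_ofReal_rpow_neg_mul_iSup
          (F := fun u => eLpNorm (f u) 4 volume * eLpNorm (g u) 4 volume) ht' ht'₀

/-- The time-weighted `L⁴` part of the bilinear estimate: for
`0 < s < 2`, `T > 0` and `α = 1/2 - s/4`, there is a constant `C = C(s,T) > 0` such that
for all continuous `f, g : (0,T) → L² ∩ L⁴` with finite time-weighted `L⁴` norms,
`sup_{t∈(0,T)} t^α ∫₀ᵗ ‖S(t-t')(f(t')g(t'))‖_{L⁴} dt'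
  ≤ C sup_{t∈(0,T)} t^{2α} ‖f(t)‖_{L⁴} ‖g(t)‖_{L⁴}`. -/
theorem bilinear_L4_piece
    (s T α : ℝ) (hs0 : 0 < s) (hs : s < 2) (hT : 0 < T) (hα : α = 1 / 2 - s / 4) :
    ∃ C : ℝ, 0 < C ∧
      ∀ f g : ℝ → ℝ → ℂ, ContL2L4 T f → ContL2L4 T g →
        (⨆ t ∈ Set.Ioo (0 : ℝ) T, ENNReal.ofReal (t ^ α) * eLpNorm (f t) 4 volume) < ⊤ →
        (⨆ t ∈ Set.Ioo (0 : ℝ) T, ENNReal.ofReal (t ^ α) * eLpNorm (g t) 4 volume) < ⊤ →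
        (⨆ t ∈ Set.Ioo (0 : ℝ) T,
            ENNReal.ofReal (t ^ α) *
              ∫⁻ t' in Set.Ioo (0 : ℝ) t,
                eLpNorm (heatS (t - t') fun x => f t' x * g t' x) 4 volume) ≤
          ENNReal.ofReal C *
            ⨆ t ∈ Set.Ioo (0 : ℝ) T,
              ENNReal.ofReal (t ^ (2 * α)) * (eLpNorm (f t) 4 volume *
                eLpNorm (g t) 4 volume) := by
  have hα₀ : 0 ≤ 2 * α := by rw [hα]; linarith
  have hα₁ : 2 * α < 1 := by rw [hα]; linarith
  set c : ℝ := 2 ^ (1 / 8 : ℝ) / (1 - 2 * α) + 2 ^ (2 * α) / (1 - 1 / 8)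
  have hc : 0 < c := by
    have : 0 < 1 - 2 * α := by linarith
    positivity
  refine ⟨c * T ^ (7 / 8 - α), by positivity, fun f g hf hg _ _ => iSup₂_le fun t ht => ?_⟩
  obtain ⟨ht₀, htT⟩ := ht
  set M := ⨆ t ∈ Set.Ioo (0 : ℝ) T,
    ENNReal.ofReal (t ^ (2 * α)) * (eLpNorm (f t) 4 volume * eLpNorm (g t) 4 volume)
  have hweight : t ^ α * (c * t ^ (1 - 1 / 8 - 2 * α)) ≤ c * T ^ (7 / 8 - α) := by
    rw [mul_left_comm, ← Real.rpow_add ht₀, show α + (1 - 1 / 8 - 2 * α) = 7 / 8 - α by ring]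
    gcongr
    linarith
  calc ENNReal.ofReal (t ^ α) * ∫⁻ t' in Set.Ioo 0 t,
        eLpNorm (heatS (t - t') fun x => f t' x * g t' x) 4 volume
      ≤ ENNReal.ofReal (t ^ α) * ∫⁻ t' in Set.Ioo 0 t,
          ENNReal.ofReal ((t - t') ^ (-(1 / 8 : ℝ)) * t' ^ (-(2 * α))) * M := by
        gcongr _ * ?_
        refine setLIntegral_mono (by fun_prop) fun t' ⟨ht'₀, ht't⟩ => ?_
        have ht'T : t' ∈ Set.Ioo 0 T := ⟨ht'₀, ht't.trans htT⟩
        exact eLpNorm_heatS_mul_le_iSup (hf.1 t' ht'T).2.1 (hg.1 t' ht'T).2.1 (sub_pos.2 ht't)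
          ht'T ht'₀
    _ ≤ ENNReal.ofReal (t ^ α) * ENNReal.ofReal (c * t ^ (1 - 1 / 8 - 2 * α)) * M := by
        rw [lintegral_mul_const _ (by fun_prop), mul_assoc]
        gcongr
        exact setLIntegral_Ioo_rpow_sub_mul_rpow_le ht₀ (by norm_num) (by norm_num) hα₀ hα₁
    _ ≤ ENNReal.ofReal (c * T ^ (7 / 8 - α)) * M := by
        rw [← ENNReal.ofReal_mul (by positivity)]
        gcongr
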